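/- arXiv:1206.3672 — 2 statements merged into one kernel-verified Lean document; each statement's English description precedes it below -/
import Mathlib

section
/- For a bounded Borel set A, define the transportation cost on A as the random variable C_A(omega) := inf{Cost(q) : q a semicoupling of lambda^omega and 1_A mu^omega}. Then: (1) for every omega and every finite family of pairwise disjoint bounded Borel sets A_1, ..., A_n, one has C_{A_1 union ... union A_n}(omega) >= C_{A_1}(omega) + ... + C_{A_n}(omega); (2) if lambda^bullet and mu^bullet are equivariant and A_1 = g A_2 for some g in G, then the random variables C_{A_1} and C_{A_2} are identically distributed. -/
/-! Restricting a semicoupling of `λ` and `1_{⋃ Aᵢ} μ` to the pairs whose target lies in `Aᵢ`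
gives semicouplings of `λ` and `1_{Aᵢ} μ` whose costs add up to at most the original cost.
Pushing a semicoupling forward by the isometry `x ↦ g • x` keeps its cost and, by equivariance,
turns a semicoupling for `(ω, A)` into one for `(θ_g ω, g • A)`; hence `C_{gA} ∘ θ_g = C_A`,
and stationarity of `P` makes the two laws equal. Since `θ_g` is a measurable bijection, this
holds even when `C_A` is not measurable. -/

open MeasureTheory ENNReal Filter Topology
open scoped Pointwise ENNReal symmDiff

/-- The cost function on `M × M` induced by a scale function `ϑ` : `c(x,y) = ϑ(d(x,y))`. -/
noncomputable def costFn {M : Type*} [MetricSpace M] (ϑ : ℝ → ℝ) (p : M × M) : ℝ≥0∞ :=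
  ENNReal.ofReal (ϑ (dist p.1 p.2))

/-- A scale function: continuous, strictly increasing on `[0,∞)`, `ϑ(0)=0`, `ϑ(r)→∞`. -/
structure IsScaleFn (ϑ : ℝ → ℝ) : Prop where
  continuous : Continuous ϑ
  strictMono : StrictMonoOn ϑ (Set.Ici (0:ℝ))
  map_zero : ϑ 0 = 0
  tendsto_atTop : Tendsto ϑ atTop atTop

/-- Total transportation cost of a transport plan `q` for cost `c(x,y)=ϑ(d(x,y))`. -/
noncomputable def Cost {M : Type*} [MetricSpace M] [MeasurableSpace M]
    (ϑ : ℝ → ℝ) (q : Measure (M × M)) : ℝ≥0∞ :=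
  ∫⁻ p, costFn ϑ p ∂q

/-- `q` is a semicoupling of `lam` and `mu`: first marginal `≤ lam`, second marginal `= mu`. -/
def IsSemicoupling {M : Type*} [MeasurableSpace M] (lam mu : Measure M)
    (q : Measure (M × M)) : Prop :=
  q.fst ≤ lam ∧ q.snd = mu

/-- `q` is a coupling of `lam` and `mu`. -/
def IsCoupling {M : Type*} [MeasurableSpace M] (lam mu : Measure M)
    (q : Measure (M × M)) : Prop :=
  q.fst = lam ∧ q.snd = mu

/-- A measure is compactly supported if it vanishes outside some compact set. -/
def HasCompactSupportMeas {M : Type*} [TopologicalSpace M] [MeasurableSpace M]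
    (μ : Measure M) : Prop :=
  ∃ K : Set M, IsCompact K ∧ μ Kᶜ = 0

/-- The support of a measure: points all of whose neighbourhoods have positive mass. -/
def msupport {M : Type*} [TopologicalSpace M] [MeasurableSpace M] (μ : Measure M) : Set M :=
  {x | ∀ U ∈ nhds x, 0 < μ U}

/-- Monge uniqueness assumption: for compactly supported probability measures `lam ≪ m` and
`mu`, the Monge-Kantorovich problem with cost `ϑ ∘ d` has a unique minimizer, induced by a
measurable transport map. -/
def MongeUnique {M : Type*} [MetricSpace M] [MeasurableSpace M]
    (m : Measure M) (ϑ : ℝ → ℝ) : Prop :=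
  ∀ lam mu : Measure M, IsProbabilityMeasure lam → IsProbabilityMeasure mu →
    HasCompactSupportMeas lam → HasCompactSupportMeas mu → lam ≪ m →
    (∃! q : Measure (M × M), IsCoupling lam mu q ∧
        ∀ q' : Measure (M × M), IsCoupling lam mu q' → Cost ϑ q ≤ Cost ϑ q') ∧
    (∀ q : Measure (M × M),
      (IsCoupling lam mu q ∧ ∀ q' : Measure (M × M), IsCoupling lam mu q' →
          Cost ϑ q ≤ Cost ϑ q') →
      ∃ T : M → M, Measurable T ∧ q = Measure.map (fun x => (x, T x)) lam)

section GroupSetup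

variable {M : Type*} [MetricSpace M] [MeasurableSpace M]
variable {Ω : Type*} [MeasurableSpace Ω]

/-- A (strict) fundamental domain for the action of `G` on `M`: a Borel set whose translates
are pairwise disjoint and cover `M`. -/
def IsFundDom (G : Type*) [Group G] [MulAction G M] (F : Set M) : Prop :=
  MeasurableSet F ∧ ∀ x : M, ∃! g : G, x ∈ g • F

/-- Admissible sets: finite nonempty unions of translates of a fundamental domain. -/
def Adm (G : Type*) [Group G] [MulAction G M] (B : Set M) : Prop :=
  ∃ (F : Set M) (I : Set G), IsFundDom G F ∧ I.Finite ∧ I.Nonempty ∧ B = ⋃ g ∈ I, g • F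

/-- The action of `G` on `M` is properly discontinuous. -/
def ProperlyDiscontinuousAct (G : Type*) [Group G] [MulAction G M] : Prop :=
  ∀ (x : M) (K : Set M), IsCompact K → {g : G | g • x ∈ K}.Finite

/-- The action of `G` on `M` is cocompact. -/
def CocompactAct (G : Type*) [Group G] [MulAction G M] : Prop :=
  ∃ K : Set M, IsCompact K ∧ ⋃ g : G, g • K = Set.univ

/-- The action of `G` on `M` is free. -/
def FreeAct (G : Type*) [Group G] [MulAction G M] : Prop :=
  ∀ (g : G) (x : M), g • x = x → g = 1

/-- `θ` is a measurable flow on `Ω` indexed by `G`. -/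
structure IsFlow {G : Type*} [Group G] (θ : G → Ω → Ω) : Prop where
  measurable : ∀ g : G, Measurable (θ g)
  map_one : θ 1 = id
  map_mul : ∀ g h : G, θ g ∘ θ h = θ (g * h)

/-- `P` is stationary under the flow `θ`. -/
def Stationary {G : Type*} [Group G] (θ : G → Ω → Ω) (P : Measure Ω) : Prop :=
  ∀ g : G, P.map (θ g) = P

/-- An equivariant random measure: `λ^{θ_g ω}(gA) = λ^ω(A)`, i.e.
`λ^{θ_g ω} = (g•)_* λ^ω`. -/
def EquivRandMeasure {G : Type*} [Group G] [MulAction G M] (θ : G → Ω → Ω)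
    (lam : Ω → Measure M) : Prop :=
  ∀ (g : G) (ω : Ω), lam (θ g ω) = Measure.map (fun x => g • x) (lam ω)

/-- An equivariant random measure on `M × M` (under the diagonal action). -/
def EquivRandCoupling {G : Type*} [Group G] [MulAction G M] (θ : G → Ω → Ω)
    (q : Ω → Measure (M × M)) : Prop :=
  ∀ (g : G) (ω : Ω), q (θ g ω) = Measure.map (fun p : M × M => (g • p.1, g • p.2)) (q ω)

/-- The random measure `lam` has intensity `β` (w.r.t. the reference measure `m`). -/
def HasIntensity (m : Measure M) (P : Measure Ω) (lam : Ω → Measure M) (β : ℝ≥0∞) : Prop :=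
  ∀ A : Set M, MeasurableSet A → ∫⁻ ω, lam ω A ∂P = β * m A

/-- The random measure `lam` is absolutely continuous w.r.t. `m`, a.s. -/
def AbsContRand (m : Measure M) (P : Measure Ω) (lam : Ω → Measure M) : Prop :=
  ∀ᵐ ω ∂P, lam ω ≪ m

/-- A semicoupling of the random measures `lam` and `mu`. -/
def IsRandSemicoupling (P : Measure Ω) (lam mu : Ω → Measure M)
    (q : Ω → Measure (M × M)) : Prop :=
  Measurable q ∧ ∀ᵐ ω ∂P, IsSemicoupling (lam ω) (mu ω) (q ω)

/-- A coupling of the random measures `lam` and `mu`. -/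
def IsRandCoupling (P : Measure Ω) (lam mu : Ω → Measure M)
    (q : Ω → Measure (M × M)) : Prop :=
  Measurable q ∧ ∀ᵐ ω ∂P, IsCoupling (lam ω) (mu ω) (q ω)

/-- The mean transportation cost of a (semi)coupling: supremum over admissible sets `B` of the
normalized expected cost of the transport into `B`. -/
noncomputable def meanCost (G : Type*) [Group G] [MulAction G M] (m : Measure M)
    (P : Measure Ω) (ϑ : ℝ → ℝ) (q : Ω → Measure (M × M)) : ℝ≥0∞ :=
  ⨆ B ∈ {B : Set M | Adm G B},
    (m B)⁻¹ * ∫⁻ ω, ∫⁻ p in Set.univ ×ˢ B, costFn ϑ p ∂(q ω) ∂P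

/-- The optimal mean transportation cost over equivariant semicouplings. -/
noncomputable def ceInftySemi (G : Type*) [Group G] [MulAction G M] (m : Measure M)
    (P : Measure Ω) (ϑ : ℝ → ℝ) (θ : G → Ω → Ω) (lam mu : Ω → Measure M) : ℝ≥0∞ :=
  ⨅ q ∈ {q : Ω → Measure (M × M) |
      IsRandSemicoupling P lam mu q ∧ EquivRandCoupling θ q},
    meanCost G m P ϑ q

/-- The optimal mean transportation cost over equivariant couplings. -/
noncomputable def ceInftyCoup (G : Type*) [Group G] [MulAction G M] (m : Measure M)
    (P : Measure Ω) (ϑ : ℝ → ℝ) (θ : G → Ω → Ω) (lam mu : Ω → Measure M) : ℝ≥0∞ :=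
  ⨅ q ∈ {q : Ω → Measure (M × M) |
      IsRandCoupling P lam mu q ∧ EquivRandCoupling θ q},
    meanCost G m P ϑ q

/-- An optimal semicoupling: equivariant and attaining the optimal mean transportation cost. -/
def IsOptSemicoupling (G : Type*) [Group G] [MulAction G M] (m : Measure M)
    (P : Measure Ω) (ϑ : ℝ → ℝ) (θ : G → Ω → Ω) (lam mu : Ω → Measure M)
    (q : Ω → Measure (M × M)) : Prop :=
  IsRandSemicoupling P lam mu q ∧ EquivRandCoupling θ q ∧
    meanCost G m P ϑ q = ceInftySemi G m P ϑ θ lam mu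

/-- An optimal coupling: equivariant and attaining the optimal mean transportation cost. -/
def IsOptCoupling (G : Type*) [Group G] [MulAction G M] (m : Measure M)
    (P : Measure Ω) (ϑ : ℝ → ℝ) (θ : G → Ω → Ω) (lam mu : Ω → Measure M)
    (q : Ω → Measure (M × M)) : Prop :=
  IsRandCoupling P lam mu q ∧ EquivRandCoupling θ q ∧
    meanCost G m P ϑ q = ceInftyCoup G m P ϑ θ lam mu

end GroupSetup

/-- The transportation cost on `A`: optimal cost of semicouplings of `λ^ω` and `1_A μ^ω`. -/
noncomputable def transpCostOn {M : Type*} [MetricSpace M] [MeasurableSpace M]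
    {Ω : Type*} (ϑ : ℝ → ℝ) (lam mu : Ω → Measure M) (A : Set M) (ω : Ω) : ℝ≥0∞ :=
  ⨅ q ∈ {q : Measure (M × M) | IsSemicoupling (lam ω) ((mu ω).restrict A) q}, Cost ϑ q

section Semicoupling

variable {α : Type*} [MeasurableSpace α] {lam mu : Measure α} {q : Measure (α × α)}

theorem IsSemicoupling.restrict_univ_prod (hq : IsSemicoupling lam mu q) {A : Set α}
    (hA : MeasurableSet A) :
    IsSemicoupling lam (mu.restrict A) (q.restrict (Set.univ ×ˢ A)) := by
  refine ⟨(Measure.fst_mono Measure.restrict_le_self).trans hq.1, ?_⟩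
  rw [← hq.2, Measure.snd, Measure.snd, Measure.restrict_map measurable_snd hA, Set.univ_prod]

theorem IsSemicoupling.map_prodMap (hq : IsSemicoupling lam mu q) {f : α → α}
    (hf : Measurable f) :
    IsSemicoupling (lam.map f) (mu.map f) (q.map (Prod.map f f)) := by
  refine ⟨?_, ?_⟩
  · rw [Measure.fst, Measure.map_map measurable_fst (hf.prodMap hf)]
    exact (Measure.map_map hf measurable_fst).symm.trans_le (Measure.map_mono hq.1 hf)
  · rw [Measure.snd, Measure.map_map measurable_snd (hf.prodMap hf), ← hq.2, Measure.snd,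
      Measure.map_map hf measurable_snd]
    rfl

end Semicoupling

section Cost

variable {M : Type*} [MetricSpace M] [MeasurableSpace M] (ϑ : ℝ → ℝ)

theorem tsum_cost_restrict_le {ι : Type*} [Countable ι] (q : Measure (M × M))
    {s : ι → Set (M × M)} (hs : ∀ i, MeasurableSet (s i))
    (hd : Pairwise fun i j => Disjoint (s i) (s j)) :
    ∑' i, Cost ϑ (q.restrict (s i)) ≤ Cost ϑ q :=
  calc ∑' i, Cost ϑ (q.restrict (s i)) = ∫⁻ p in ⋃ i, s i, costFn ϑ p ∂q :=
        (lintegral_iUnion hs hd _).symm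
    _ ≤ Cost ϑ q := setLIntegral_le_lintegral _ _

theorem cost_map_prodMap_of_isometry (e : M ≃ᵐ M) (he : Isometry e) (q : Measure (M × M)) :
    Cost ϑ (q.map (Prod.map e e)) = Cost ϑ q := by
  refine (lintegral_map_equiv (costFn ϑ) (e.prodCongr e)).trans ?_
  refine lintegral_congr fun p => ?_
  exact congrArg (fun r => ENNReal.ofReal (ϑ r)) (he.dist_eq p.1 p.2)

end Cost

section Flow

variable {Ω : Type*} [MeasurableSpace Ω] {G : Type*} [Group G] {θ : G → Ω → Ω}

theorem IsFlow.apply_inv_apply (hθ : IsFlow θ) (g : G) (ω : Ω) : θ g (θ g⁻¹ ω) = ω := by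
  simpa [hθ.map_one] using congrFun (hθ.map_mul g g⁻¹) ω

theorem IsFlow.inv_apply_apply (hθ : IsFlow θ) (g : G) (ω : Ω) :
    θ g⁻¹ (θ g ω) = ω := by
  simpa [hθ.map_one] using congrFun (hθ.map_mul g⁻¹ g) ω

def IsFlow.measurableEquiv (hθ : IsFlow θ) (g : G) : Ω ≃ᵐ Ω where
  toFun := θ g
  invFun := θ g⁻¹
  left_inv := hθ.inv_apply_apply g
  right_inv := hθ.apply_inv_apply g
  measurable_toFun := hθ.measurable g
  measurable_invFun := hθ.measurable g⁻¹

theorem Stationary.map_comp_flow {P : Measure Ω} (hθ : IsFlow θ) (hP : Stationary θ P) (g : G)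
    {α : Type*} [MeasurableSpace α] (f : Ω → α) :
    P.map (f ∘ θ g) = P.map f := by
  by_cases hf : AEMeasurable f P
  · rw [← AEMeasurable.map_map_of_aemeasurable ((hP g).symm ▸ hf) (hθ.measurable g).aemeasurable,
      hP g]
  · have hmp : MeasurePreserving (θ g) P P := ⟨hθ.measurable g, hP g⟩
    have hfθ : ¬ AEMeasurable (f ∘ θ g) P :=
      (hmp.aemeasurable_comp_iff (hθ.measurableEquiv g).measurableEmbedding).not.2 hf
    rw [Measure.map_of_not_aemeasurable hf, Measure.map_of_not_aemeasurable hfθ]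

end Flow

section TranspCost

variable {M : Type*} [MetricSpace M] [MeasurableSpace M] {Ω : Type*} (ϑ : ℝ → ℝ)
  (lam mu : Ω → Measure M)

theorem tsum_transpCostOn_le {ι : Type*} [Countable ι] {A : ι → Set M}
    (hA : ∀ i, MeasurableSet (A i)) (hd : Pairwise fun i j => Disjoint (A i) (A j)) (ω : Ω) :
    ∑' i, transpCostOn ϑ lam mu (A i) ω ≤ transpCostOn ϑ lam mu (⋃ i, A i) ω := by
  refine le_iInf₂ fun q hq => ?_
  have hqi (i : ι) : transpCostOn ϑ lam mu (A i) ω ≤ Cost ϑ (q.restrict (Set.univ ×ˢ A i)) := by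
    refine iInf₂_le _ ?_
    simpa only [Set.mem_ofPred_eq, Measure.restrict_restrict (hA i),
      Set.inter_eq_left.2 (Set.subset_iUnion A i)] using hq.restrict_univ_prod (hA i)
  exact (ENNReal.tsum_le_tsum hqi).trans <| tsum_cost_restrict_le ϑ q
    (fun i => MeasurableSet.univ.prod (hA i))
    (fun i j hij => Set.disjoint_prod.2 (Or.inr (hd hij)))

variable {G : Type*} [Group G] [MulAction G M] [IsIsometricSMul G M] [BorelSpace M]
  {θ : G → Ω → Ω}

theorem transpCostOn_smul_flow_le (hlam : EquivRandMeasure θ lam) (hmu : EquivRandMeasure θ mu)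
    (g : G) (A : Set M) (ω : Ω) :
    transpCostOn ϑ lam mu (g • A) (θ g ω) ≤ transpCostOn ϑ lam mu A ω := by
  refine le_iInf₂ fun q hq => ?_
  let e : M ≃ᵐ M := MeasurableEquiv.smul g
  have hsemi : IsSemicoupling (lam (θ g ω)) ((mu (θ g ω)).restrict (g • A))
      (q.map (Prod.map e e)) := by
    have hpre : e ⁻¹' (g • A) = A := by
      simp [e, Set.preimage_smul]
    rw [hlam, hmu]
    change IsSemicoupling ((lam ω).map e) (((mu ω).map e).restrict (g • A)) _
    rw [e.restrict_map, hpre]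
    exact hq.map_prodMap e.measurable
  exact (iInf₂_le _ hsemi).trans_eq (cost_map_prodMap_of_isometry ϑ e (isometry_smul M g) q)

theorem transpCostOn_smul_flow [MeasurableSpace Ω] (hθ : IsFlow θ)
    (hlam : EquivRandMeasure θ lam) (hmu : EquivRandMeasure θ mu) (g : G) (A : Set M) (ω : Ω) :
    transpCostOn ϑ lam mu (g • A) (θ g ω) = transpCostOn ϑ lam mu A ω := by
  refine le_antisymm (transpCostOn_smul_flow_le ϑ lam mu hlam hmu g A ω) ?_
  have h := transpCostOn_smul_flow_le ϑ lam mu hlam hmu g⁻¹ (g • A) (θ g ω)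
  rwa [inv_smul_smul, hθ.inv_apply_apply] at h

end TranspCost

theorem transport_cost_superadditive_and_equivariant_general
    {M : Type*} [MetricSpace M] [MeasurableSpace M] [BorelSpace M]
    {Ω : Type*} [MeasurableSpace Ω]
    (G : Type*) [Group G] [MulAction G M]
    -- G acts on M by measure-preserving isometries, properly discontinuously,
    -- cocompactly and freely
    (hiso : ∀ g : G, Isometry (fun x : M => g • x))
    (ϑ : ℝ → ℝ)
    (P : Measure Ω)
    (θ : G → Ω → Ω) (hθ : IsFlow θ) (hstat : Stationary θ P)
    (lam mu : Ω → Measure M)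
    (hlameq : EquivRandMeasure θ lam) (hmueq : EquivRandMeasure θ mu) :
    -- (1) superadditivity over disjoint bounded Borel sets
    (∀ (ω : Ω) (n : ℕ) (A : Fin n → Set M),
      (∀ i, MeasurableSet (A i)) → (∀ i, Bornology.IsBounded (A i)) →
      (Pairwise fun i j => Disjoint (A i) (A j)) →
      ∑ i, transpCostOn ϑ lam mu (A i) ω ≤ transpCostOn ϑ lam mu (⋃ i, A i) ω) ∧
    -- (2) if `A₁ = g A₂`, then the transportation costs on `A₁` and `A₂` are
    --     identically distributed
    (∀ (g : G) (A₁ A₂ : Set M), MeasurableSet A₁ → MeasurableSet A₂ →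
      Bornology.IsBounded A₁ → Bornology.IsBounded A₂ → A₁ = g • A₂ →
      P.map (transpCostOn ϑ lam mu A₁) = P.map (transpCostOn ϑ lam mu A₂)) := by
  have : IsIsometricSMul G M := ⟨hiso⟩
  refine ⟨fun ω n A hA _ hd => ?_, ?_⟩
  · simpa only [tsum_fintype] using tsum_transpCostOn_le ϑ lam mu hA hd ω
  · rintro g _ A - - - - rfl
    rw [← Stationary.map_comp_flow hθ hstat g]
    exact congrArg P.map (funext (transpCostOn_smul_flow ϑ lam mu hθ hlameq hmueq g A))

theorem transport_cost_superadditive_and_equivariant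
    {M : Type*} [MetricSpace M] [MeasurableSpace M] [BorelSpace M]
    [ProperSpace M] [SecondCountableTopology M]
    {Ω : Type*} [MeasurableSpace Ω]
    (G : Type*) [Group G] [Countable G] [MulAction G M]
    (m : Measure M) [IsLocallyFiniteMeasure m]
    -- G acts on M by measure-preserving isometries, properly discontinuously,
    -- cocompactly and freely
    (hiso : ∀ g : G, Isometry (fun x : M => g • x))
    (hmp : ∀ g : G, MeasurePreserving (fun x : M => g • x) m m)
    (hpd : ProperlyDiscontinuousAct (M := M) G) (hcc : CocompactAct (M := M) G)
    (hfree : FreeAct (M := M) G)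
    (ϑ : ℝ → ℝ) (hϑ : IsScaleFn ϑ)
    (P : Measure Ω) [IsProbabilityMeasure P]
    (θ : G → Ω → Ω) (hθ : IsFlow θ) (hstat : Stationary θ P)
    (lam mu : Ω → Measure M) (hlammeas : Measurable lam) (hmumeas : Measurable mu)
    (hlameq : EquivRandMeasure θ lam) (hmueq : EquivRandMeasure θ mu) :
    -- (1) superadditivity over disjoint bounded Borel sets
    (∀ (ω : Ω) (n : ℕ) (A : Fin n → Set M),
      (∀ i, MeasurableSet (A i)) → (∀ i, Bornology.IsBounded (A i)) →
      (Pairwise fun i j => Disjoint (A i) (A j)) →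
      ∑ i, transpCostOn ϑ lam mu (A i) ω ≤ transpCostOn ϑ lam mu (⋃ i, A i) ω) ∧
    -- (2) if `A₁ = g A₂`, then the transportation costs on `A₁` and `A₂` are
    --     identically distributed
    (∀ (g : G) (A₁ A₂ : Set M), MeasurableSet A₁ → MeasurableSet A₂ →
      Bornology.IsBounded A₁ → Bornology.IsBounded A₂ → A₁ = g • A₂ →
      P.map (transpCostOn ϑ lam mu A₁) = P.map (transpCostOn ϑ lam mu A₂)) :=
  transport_cost_superadditive_and_equivariant_general G hiso ϑ P θ hθ hstat lam mu hlameq hmueq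
end

section
/- Let Z = X_1 + ... + X_N, where N is a Poisson random variable with mean alpha > 0 and (X_i)_{i >= 1} is an i.i.d. sequence of exponentially distributed random variables with mean 1, independent of N. Then for every 0 < rho < 1: P[|Z - alpha| > alpha * rho] <= 2 * exp(-alpha * (2 + rho - 2 * sqrt(1 + rho))) <= 2 * exp(-alpha * (rho^2 / 4 - rho^3 / 8)). -/
/-!
Conditioning on `N`, the Laplace transform of `Z` is explicit: for `t < 1`,
`E[e^{tZ}] = E[(1 - t)^{-N}] = exp (α (1 / (1 - t) - 1))`. Chernoff's bound at `t = 1 - 1/s`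
(optimal for the threshold `α s²`) gives `P[(s - 1) Z ≥ (s - 1) α s²] ≤ exp (-α (s - 1)²)`.
Taking `s = √(1 + ρ)` and `s = √(1 - ρ)` bounds the two tails, and the lower-tail exponent
dominates the upper one since `√(1 + ρ) + √(1 - ρ) ≤ 2`. The second inequality is the Taylor
bound `√(1 + ρ) ≤ 1 + ρ/2 - ρ²/8 + ρ³/16`.
-/

open MeasureTheory ProbabilityTheory Real Set
open scoped ENNReal NNReal Nat

lemma lintegral_exp_mul_expMeasure {r t : ℝ} (hr : 0 ≤ r) (ht : t < r) :
    ∫⁻ x, ENNReal.ofReal (exp (t * x)) ∂expMeasure r = ENNReal.ofReal (r / (r - t)) := by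
  have hdensity : exponentialPDF r * (fun x ↦ ENNReal.ofReal (exp (t * x))) =
      (Ici 0).indicator (fun x ↦ ENNReal.ofReal (r * exp ((t - r) * x))) := by
    ext x
    rcases le_or_gt 0 x with hx | hx
    · rw [Pi.mul_apply, indicator_of_mem (mem_Ici.2 hx), exponentialPDF_of_nonneg hx,
        ← ENNReal.ofReal_mul (by positivity), mul_assoc, ← exp_add]
      ring_nf
    · rw [Pi.mul_apply, exponentialPDF_of_neg hx, zero_mul, indicator_of_notMem (notMem_Ici.2 hx)]
  have hint : IntegrableOn (fun x ↦ r * exp ((t - r) * x)) (Ici 0) :=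
    ((integrableOn_Ici_iff_integrableOn_Ioi (by simp)).2
      (integrableOn_exp_mul_Ioi (by linarith) 0)).const_mul r
  change ∫⁻ x, _ ∂volume.withDensity (exponentialPDF r) = _
  rw [lintegral_withDensity_eq_lintegral_mul _ (f := exponentialPDF r)
    (measurable_exponentialPDFReal r).ennreal_ofReal (by fun_prop), hdensity,
    lintegral_indicator measurableSet_Ici,
    ← ofReal_integral_eq_lintegral_ofReal hint (ae_of_all _ fun x ↦ by positivity),
    integral_Ici_eq_integral_Ioi, integral_const_mul, integral_exp_mul_Ioi (by linarith),
    mul_zero, exp_zero, neg_div, ← div_neg, neg_sub, mul_one_div]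

lemma hasSum_poissonMeasure_mul_pow (r : ℝ≥0) (x : ℝ) :
    HasSum (fun n ↦ exp (-r) * r ^ n / n ! * x ^ n) (exp (r * (x - 1))) := by
  convert! (NormedSpace.expSeries_div_hasSum_exp ((r : ℝ) * x)).mul_left (exp (-r)) using 1
  · funext n
    ring
  · rw [← exp_eq_exp_ℝ, ← exp_add]
    ring_nf

lemma lintegral_pow_poissonMeasure (r : ℝ≥0) {x : ℝ} (hx : 0 ≤ x) :
    ∫⁻ n, ENNReal.ofReal x ^ n ∂poissonMeasure r = ENNReal.ofReal (exp (r * (x - 1))) := by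
  simp only [poissonMeasure, lintegral_sum_measure, lintegral_smul_measure, lintegral_dirac,
    smul_eq_mul]
  rw [← (hasSum_poissonMeasure_mul_pow r x).tsum_eq, ENNReal.ofReal_tsum_of_nonneg
    (fun n ↦ by positivity) (hasSum_poissonMeasure_mul_pow r x).summable]
  congr 1 with n
  rw [ENNReal.ofReal_mul (by positivity), ENNReal.ofReal_pow hx]

lemma ofReal_exp_mul_sum {ι : Type*} (s : Finset ι) (t : ℝ) (x : ι → ℝ) :
    ENNReal.ofReal (exp (t * ∑ i ∈ s, x i)) = ∏ i ∈ s, ENNReal.ofReal (exp (t * x i)) := by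
  rw [Finset.mul_sum, exp_sum, ENNReal.ofReal_prod_of_nonneg fun _ _ ↦ (exp_pos _).le]

lemma measurable_sum_range {Ω M : Type*} [MeasurableSpace Ω] [AddCommMonoid M] [MeasurableSpace M]
    [MeasurableAdd₂ M] {N : Ω → ℕ} {X : ℕ → Ω → M} (hN : Measurable N)
    (hX : ∀ i, Measurable (X i)) :
    Measurable fun ω ↦ ∑ i ∈ Finset.range (N ω), X i ω := by
  have hsum : Measurable fun p : ℕ × Ω ↦ ∑ i ∈ Finset.range p.1, X i p.2 :=
    measurable_from_prod_countable_right fun n ↦ (Finset.range n).measurable_sum fun i _ ↦ hX i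
  exact hsum.comp (hN.prodMk measurable_id)

namespace ProbabilityTheory

variable {Ω β : Type*} [MeasurableSpace Ω] [MeasurableSpace β] {P : Measure Ω}

lemma iIndepFun.lintegral_prod_comp_eq_pow {ι : Type*} {X : ι → Ω → β} {μ : Measure β}
    (hXindep : iIndepFun X P) (hX : ∀ i, Measurable (X i)) (hXdist : ∀ i, P.map (X i) = μ)
    {f : β → ℝ≥0∞} (hf : Measurable f) (s : Finset ι) :
    ∫⁻ ω, ∏ i ∈ s, f (X i ω) ∂P = (∫⁻ x, f x ∂μ) ^ s.card := by
  calc ∫⁻ ω, ∏ i ∈ s, f (X i ω) ∂P = ∏ i ∈ s, ∫⁻ ω, f (X i ω) ∂P :=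
        lintegral_prod_eq_prod_lintegral_of_indepFun s (fun i ω ↦ f (X i ω))
          (hXindep.comp _ fun _ ↦ hf) fun i ↦ hf.comp (hX i)
    _ = ∏ i ∈ s, ∫⁻ x, f x ∂μ :=
        Finset.prod_congr rfl fun i _ ↦ by rw [← hXdist i, lintegral_map hf (hX i)]
    _ = (∫⁻ x, f x ∂μ) ^ s.card := Finset.prod_const _

lemma IndepFun.lintegral_comp_eq_lintegral_lintegral {κ : Type*} [MeasurableSpace κ]
    [Countable κ] [MeasurableSingletonClass κ] [IsFiniteMeasure P] {N : Ω → κ} {Y : Ω → β}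
    (hNY : IndepFun N Y P) (hN : Measurable N) (hY : Measurable Y)
    {F : κ → β → ℝ≥0∞} (hF : ∀ n, Measurable (F n)) :
    ∫⁻ ω, F (N ω) (Y ω) ∂P = ∫⁻ n, ∫⁻ ω, F n (Y ω) ∂P ∂P.map N := by
  have hFm : Measurable (Function.uncurry F) := measurable_from_prod_countable_right hF
  calc ∫⁻ ω, F (N ω) (Y ω) ∂P
      = ∫⁻ p, Function.uncurry F p ∂P.map fun ω ↦ (N ω, Y ω) :=
        (lintegral_map hFm (hN.prodMk hY)).symm
    _ = ∫⁻ n, ∫⁻ y, F n y ∂P.map Y ∂P.map N := by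
        rw [hNY.map_prod_eq_prod_map_map hN.aemeasurable hY.aemeasurable,
          lintegral_prod _ hFm.aemeasurable]
        rfl
    _ = ∫⁻ n, ∫⁻ ω, F n (Y ω) ∂P ∂P.map N := by
        simp_rw [lintegral_map (hF _) hY]

lemma lintegral_exp_mul_sum_range_eq_lintegral_pow [IsFiniteMeasure P] {N : Ω → ℕ}
    {X : ℕ → Ω → ℝ} {μ : Measure ℝ} (hN : Measurable N) (hX : ∀ i, Measurable (X i))
    (hXdist : ∀ i, P.map (X i) = μ) (hXindep : iIndepFun X P)
    (hNX : IndepFun N (fun ω i ↦ X i ω) P) (t : ℝ) :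
    ∫⁻ ω, ENNReal.ofReal (exp (t * ∑ i ∈ Finset.range (N ω), X i ω)) ∂P =
      ∫⁻ n, (∫⁻ x, ENNReal.ofReal (exp (t * x)) ∂μ) ^ n ∂P.map N := by
  have hf : Measurable fun x : ℝ ↦ ENNReal.ofReal (exp (t * x)) := by fun_prop
  simp_rw [ofReal_exp_mul_sum]
  rw [hNX.lintegral_comp_eq_lintegral_lintegral (F := fun n x ↦ ∏ i ∈ Finset.range n,
    ENNReal.ofReal (exp (t * x i))) hN (measurable_pi_lambda _ hX) fun n ↦ by fun_prop]
  simp_rw [hXindep.lintegral_prod_comp_eq_pow hX hXdist hf, Finset.card_range]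

end ProbabilityTheory

section Chernoff

variable {Ω : Type*} [MeasurableSpace Ω] {P : Measure Ω}

lemma measure_le_exp_neg_mul_lintegral_exp {Y : Ω → ℝ} (hY : AEMeasurable Y P) (a : ℝ) :
    P {ω | a ≤ Y ω} ≤
      ENNReal.ofReal (exp (-a)) * ∫⁻ ω, ENNReal.ofReal (exp (Y ω)) ∂P := by
  calc P {ω | a ≤ Y ω}
      ≤ P {ω | ENNReal.ofReal (exp a) ≤ ENNReal.ofReal (exp (Y ω))} :=
        measure_mono fun ω hω ↦ ENNReal.ofReal_le_ofReal (exp_le_exp.2 hω)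
    _ ≤ (∫⁻ ω, ENNReal.ofReal (exp (Y ω)) ∂P) / ENNReal.ofReal (exp a) :=
        meas_ge_le_lintegral_div (by fun_prop) (by simp [exp_pos]) ENNReal.ofReal_ne_top
    _ = ENNReal.ofReal (exp (-a)) * ∫⁻ ω, ENNReal.ofReal (exp (Y ω)) ∂P := by
        rw [div_eq_mul_inv, mul_comm, ← ENNReal.ofReal_inv_of_pos (exp_pos a), exp_neg]

variable {Z : Ω → ℝ} {α : ℝ}

lemma measure_le_exp_neg_mul_sq (hZ : AEMeasurable Z P)
    (hmgf : ∀ t < 1, ∫⁻ ω, ENNReal.ofReal (exp (t * Z ω)) ∂P =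
      ENNReal.ofReal (exp (α * (1 / (1 - t) - 1))))
    {s : ℝ} (hs : 0 < s) :
    P {ω | (s - 1) * (α * s ^ 2) ≤ (s - 1) * Z ω} ≤
      ENNReal.ofReal (exp (-α * (s - 1) ^ 2)) := by
  set t := 1 - 1 / s
  have hts : s - 1 = s * t := by rw [mul_sub, mul_one_div_cancel hs.ne', mul_one]
  have hst : 1 / (1 - t) = s := by simp [t]
  have hset : {ω | (s - 1) * (α * s ^ 2) ≤ (s - 1) * Z ω} =
      {ω | t * (α * s ^ 2) ≤ t * Z ω} := by
    ext ω
    simp only [mem_ofPred_eq, hts, mul_assoc]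
    exact mul_le_mul_iff_right₀ hs
  rw [hset]
  refine (measure_le_exp_neg_mul_lintegral_exp (hZ.const_mul t) _).trans_eq ?_
  rw [hmgf t (by simp [t, hs]), hst, ← ENNReal.ofReal_mul (exp_pos _).le, ← exp_add]
  congr 2
  simp only [t]
  field_simp
  ring

lemma measure_mul_lt_abs_sub_le (hZ : AEMeasurable Z P)
    (hmgf : ∀ t < 1, ∫⁻ ω, ENNReal.ofReal (exp (t * Z ω)) ∂P =
      ENNReal.ofReal (exp (α * (1 / (1 - t) - 1))))
    {ρ : ℝ} (hρ0 : 0 ≤ ρ) (hρ1 : ρ < 1) :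
    P {ω | α * ρ < |Z ω - α|} ≤ ENNReal.ofReal (exp (-α * (√(1 + ρ) - 1) ^ 2)) +
      ENNReal.ofReal (exp (-α * (√(1 - ρ) - 1) ^ 2)) := by
  set q := √(1 + ρ)
  set p := √(1 - ρ)
  have hq : q ^ 2 = 1 + ρ := sq_sqrt (by linarith)
  have hp : p ^ 2 = 1 - ρ := sq_sqrt (by linarith)
  have hq1 : 1 ≤ q := one_le_sqrt.2 (by linarith)
  have hp1 : p ≤ 1 := sqrt_le_one.2 (by linarith)
  have hsub : {ω | α * ρ < |Z ω - α|} ⊆ {ω | (q - 1) * (α * q ^ 2) ≤ (q - 1) * Z ω} ∪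
      {ω | (p - 1) * (α * p ^ 2) ≤ (p - 1) * Z ω} := by
    intro ω hω
    rcases lt_abs.1 (show α * ρ < |Z ω - α| from hω) with hup | hlow
    · refine Or.inl (mul_le_mul_of_nonneg_left ?_ (sub_nonneg.2 hq1))
      rw [hq]
      linarith
    · refine Or.inr (mul_le_mul_of_nonpos_left ?_ (sub_nonpos.2 hp1))
      rw [hp]
      linarith
  calc P {ω | α * ρ < |Z ω - α|}
      ≤ P {ω | (q - 1) * (α * q ^ 2) ≤ (q - 1) * Z ω} +
          P {ω | (p - 1) * (α * p ^ 2) ≤ (p - 1) * Z ω} :=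
          (measure_mono hsub).trans (measure_union_le _ _)
    _ ≤ _ := add_le_add (measure_le_exp_neg_mul_sq hZ hmgf (by linarith))
        (measure_le_exp_neg_mul_sq hZ hmgf (sqrt_pos.2 (by linarith)))

end Chernoff

lemma sqrt_one_add_add_sqrt_one_sub_le_two {x : ℝ} (h1 : -1 ≤ x) (h2 : x ≤ 1) :
    √(1 + x) + √(1 - x) ≤ 2 := by
  have ha := sq_sqrt (show 0 ≤ 1 + x by linarith)
  have hb := sq_sqrt (show 0 ≤ 1 - x by linarith)
  nlinarith [sq_nonneg (√(1 + x) - √(1 - x)), sqrt_nonneg (1 + x), sqrt_nonneg (1 - x)]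

lemma sqrt_one_add_le {x : ℝ} (hx : 0 ≤ x) :
    √(1 + x) ≤ 1 + x / 2 - x ^ 2 / 8 + x ^ 3 / 16 := by
  rw [sqrt_le_iff]
  constructor
  · nlinarith [sq_nonneg (x - 1)]
  · nlinarith [pow_nonneg hx 4, mul_nonneg (pow_nonneg hx 4) (sq_nonneg (x - 2))]

theorem compound_poisson_exponential_concentration_general
    {Ω : Type*} [MeasurableSpace Ω] (P : Measure Ω) [IsProbabilityMeasure P]
    (α : ℝ≥0)
    (N : Ω → ℕ) (X : ℕ → Ω → ℝ)
    (hN : Measurable N) (hX : ∀ i, Measurable (X i))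
    -- `N` is Poisson with mean `α`
    (hNdist : P.map N = poissonMeasure α)
    -- each `X i` is exponentially distributed with rate (hence mean) 1
    (hXdist : ∀ i, P.map (X i) = expMeasure 1)
    -- the `X i` are independent (hence, having the same law, i.i.d.)
    (hXindep : iIndepFun X P)
    -- the sequence `(X i)` is independent of `N`
    (hNX : IndepFun N (fun ω i => X i ω) P)
    -- `Z` is the compound Poisson sum
    (Z : Ω → ℝ) (hZ : ∀ ω, Z ω = ∑ i ∈ Finset.range (N ω), X i ω)
    (ρ : ℝ) (hρ0 : 0 < ρ) (hρ1 : ρ < 1) :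
    P {ω | (α : ℝ) * ρ < |Z ω - (α : ℝ)|} ≤
        ENNReal.ofReal (2 * Real.exp (-(α : ℝ) * (2 + ρ - 2 * Real.sqrt (1 + ρ)))) ∧
      ENNReal.ofReal (2 * Real.exp (-(α : ℝ) * (2 + ρ - 2 * Real.sqrt (1 + ρ)))) ≤
        ENNReal.ofReal (2 * Real.exp (-(α : ℝ) * (ρ ^ 2 / 4 - ρ ^ 3 / 8))) := by
  obtain rfl : Z = fun ω ↦ ∑ i ∈ Finset.range (N ω), X i ω := funext hZ
  have hmgf : ∀ t < 1,
      ∫⁻ ω, ENNReal.ofReal (exp (t * ∑ i ∈ Finset.range (N ω), X i ω)) ∂P =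
        ENNReal.ofReal (exp (α * (1 / (1 - t) - 1))) := fun t ht ↦ by
    rw [lintegral_exp_mul_sum_range_eq_lintegral_pow hN hX hXdist hXindep hNX, hNdist,
      lintegral_exp_mul_expMeasure zero_le_one ht,
      lintegral_pow_poissonMeasure α (one_div_pos.2 (sub_pos.2 ht)).le]
  have hq : (√(1 + ρ) - 1) ^ 2 = 2 + ρ - 2 * √(1 + ρ) := by
    nlinarith [sq_sqrt (show 0 ≤ 1 + ρ by linarith)]
  have hpq : (√(1 + ρ) - 1) ^ 2 ≤ (√(1 - ρ) - 1) ^ 2 := by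
    have hsum := sqrt_one_add_add_sqrt_one_sub_le_two (x := ρ) (by linarith) hρ1.le
    nlinarith [one_le_sqrt.2 (show 1 ≤ 1 + ρ by linarith)]
  refine ⟨(measure_mul_lt_abs_sub_le (measurable_sum_range hN hX).aemeasurable hmgf hρ0.le
    hρ1).trans ?_, ?_⟩
  · rw [two_mul, ENNReal.ofReal_add (exp_pos _).le (exp_pos _).le, ← hq]
    exact add_le_add le_rfl
      (ENNReal.ofReal_le_ofReal (exp_le_exp.2 (mul_le_mul_of_nonpos_left hpq (by simp))))
  · have hsqrt := sqrt_one_add_le hρ0.le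
    exact ENNReal.ofReal_le_ofReal (mul_le_mul_of_nonneg_left
      (exp_le_exp.2 (mul_le_mul_of_nonpos_left (by linarith) (by simp))) zero_le_two)

/-- Concentration for a compound Poisson sum of i.i.d. exponential weights:
if `Z = X_1 + ... + X_N` with `N` Poisson of mean `α` and `(X_i)` i.i.d. exponential of mean 1,
independent of `N`, then for `0 < ρ < 1`,
`P[|Z - α| > αρ] ≤ 2 exp(-α(2+ρ-2√(1+ρ))) ≤ 2 exp(-α(ρ²/4 - ρ³/8))`. -/
theorem compound_poisson_exponential_concentration
    {Ω : Type*} [MeasurableSpace Ω] (P : Measure Ω) [IsProbabilityMeasure P]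
    (α : ℝ≥0) (hα : 0 < α)
    (N : Ω → ℕ) (X : ℕ → Ω → ℝ)
    (hN : Measurable N) (hX : ∀ i, Measurable (X i))
    -- `N` is Poisson with mean `α`
    (hNdist : P.map N = poissonMeasure α)
    -- each `X i` is exponentially distributed with rate (hence mean) 1
    (hXdist : ∀ i, P.map (X i) = expMeasure 1)
    -- the `X i` are independent (hence, having the same law, i.i.d.)
    (hXindep : iIndepFun X P)
    -- the sequence `(X i)` is independent of `N`
    (hNX : IndepFun N (fun ω i => X i ω) P)
    -- `Z` is the compound Poisson sum
    (Z : Ω → ℝ) (hZ : ∀ ω, Z ω = ∑ i ∈ Finset.range (N ω), X i ω)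
    (ρ : ℝ) (hρ0 : 0 < ρ) (hρ1 : ρ < 1) :
    P {ω | (α : ℝ) * ρ < |Z ω - (α : ℝ)|} ≤
        ENNReal.ofReal (2 * Real.exp (-(α : ℝ) * (2 + ρ - 2 * Real.sqrt (1 + ρ)))) ∧
      ENNReal.ofReal (2 * Real.exp (-(α : ℝ) * (2 + ρ - 2 * Real.sqrt (1 + ρ)))) ≤
        ENNReal.ofReal (2 * Real.exp (-(α : ℝ) * (ρ ^ 2 / 4 - ρ ^ 3 / 8))) :=
  compound_poisson_exponential_concentration_general P α N X hN hX hNdist hXdist hXindep hNX Z hZ ρ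
    hρ0 hρ1
end
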